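/- Let M, a, s be positive integers with M > 1 such that ∑_{i=0}^{M-1} (a+i)^2 = s^2, and suppose M = 24·m₁ + 2 for a nonnegative integer m₁. Then for every prime p > 3 with p ≡ 3 (mod 4), there do not exist integers i ≥ 0 and q ≥ 1 with p ∤ q such that 24·m₁ + 3 = p^(2i+1)·q; equivalently, the exact power of p dividing M + 1 is even. -/

import Mathlib

/-!
With `b = 2a + M - 1` the hypothesis reads `12 s² = M (3b² + M² - 1)`, which rearranges to
`3((2s)² + b²) = (M + 1)(3b² + M(M - 1))`. If `p^(2i+1) ∣ M + 1`, then `p^(2i+1) ∣ (2s)² + b²`,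
and since `-1` is not a square mod `p` this forces `p^(i+1)` to divide both `2s` and `b`.
Hence `p^(2i+2) ∣ 3(2s)² - 3Mb² = M(M - 1)(M + 1)`, and `p` is prime to `M(M - 1)`.
-/

theorem twelve_mul_sum_range_add_sq {R : Type*} [CommRing R] (A : R) (M : ℕ) :
    12 * ∑ i ∈ Finset.range M, (A + i) ^ 2 = M * (3 * (2 * A + M - 1) ^ 2 + M ^ 2 - 1) := by
  induction M with
  | zero => simp
  | succ n ih =>
    rw [Finset.sum_range_succ, mul_add, ih]
    push_cast
    ring

theorem Int.natCast_dvd_of_dvd_sq_add_sq {p : ℕ} (hp : p.Prime) (hp4 : p % 4 = 3) {x y : ℤ}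
    (h : (p : ℤ) ∣ x ^ 2 + y ^ 2) : (p : ℤ) ∣ x := by
  have := Fact.mk hp
  by_contra hx
  rw [← ZMod.intCast_zmod_eq_zero_iff_dvd] at h hx
  push_cast at h
  exact ZMod.mod_four_ne_three_of_sq_eq_neg_sq' hx (eq_neg_of_add_eq_zero_right h) hp4

theorem Int.natCast_pow_succ_dvd_of_pow_dvd_sq_add_sq {p : ℕ} (hp : p.Prime) (hp4 : p % 4 = 3)
    (j : ℕ) {x y : ℤ} (h : (p : ℤ) ^ (2 * j + 1) ∣ x ^ 2 + y ^ 2) : (p : ℤ) ^ (j + 1) ∣ x := by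
  induction j generalizing x y with
  | zero => simpa using Int.natCast_dvd_of_dvd_sq_add_sq hp hp4 (by simpa using h)
  | succ j ih =>
    have hpxy : (p : ℤ) ∣ x ^ 2 + y ^ 2 := (dvd_pow_self _ (by omega)).trans h
    obtain ⟨y', rfl⟩ := Int.natCast_dvd_of_dvd_sq_add_sq hp hp4 (by rwa [add_comm] at hpxy)
    obtain ⟨x', rfl⟩ := Int.natCast_dvd_of_dvd_sq_add_sq hp hp4 hpxy
    have h' : (p : ℤ) ^ 2 * p ^ (2 * j + 1) ∣ p ^ 2 * (x' ^ 2 + y' ^ 2) := by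
      convert h using 1 <;> ring
    have hp2 : (p : ℤ) ^ 2 ≠ 0 := pow_ne_zero 2 (mod_cast hp.ne_zero)
    rw [pow_succ']
    exact mul_dvd_mul_left _ (ih ((mul_dvd_mul_iff_left hp2).mp h'))

theorem pow_even_dvd_succ_of_pow_odd_dvd_succ {p : ℕ} (hp : p.Prime) (hp3 : 3 < p)
    (hp4 : p % 4 = 3) {M b s : ℤ} (h : 12 * s ^ 2 = M * (3 * b ^ 2 + M ^ 2 - 1)) {i : ℕ}
    (hi : (p : ℤ) ^ (2 * i + 1) ∣ M + 1) : (p : ℤ) ^ (2 * i + 2) ∣ M + 1 := by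
  have hpr : Prime (p : ℤ) := Nat.prime_iff_prime_int.mp hp
  have hsmall : ∀ n : ℕ, 0 < n → n < p → ¬ (p : ℤ) ∣ n := fun n hn hnp hpn =>
    (Nat.le_of_dvd hn (Int.natCast_dvd_natCast.mp hpn)).not_gt hnp
  have hpM1 : (p : ℤ) ∣ M + 1 := (dvd_pow_self _ (by omega)).trans hi
  have hpM : ¬ (p : ℤ) ∣ M := fun hd =>
    hsmall 1 one_pos hp.one_lt (by simpa using dvd_sub hpM1 hd)
  have hpM' : ¬ (p : ℤ) ∣ M - 1 := fun hd =>
    hsmall 2 two_pos (by omega) (by simpa using dvd_sub hpM1 hd)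
  have hsq : (p : ℤ) ^ (2 * i + 1) ∣ (2 * s) ^ 2 + b ^ 2 := by
    have hcop : IsCoprime ((p : ℤ) ^ (2 * i + 1)) 3 :=
      (hpr.coprime_iff_not_dvd.mpr (hsmall 3 three_pos hp3)).pow_left
    refine hcop.dvd_of_dvd_mul_left (dvd_trans hi ⟨3 * b ^ 2 + M * (M - 1), ?_⟩)
    linear_combination h
  obtain ⟨s', hs'⟩ := Int.natCast_pow_succ_dvd_of_pow_dvd_sq_add_sq hp hp4 i hsq
  obtain ⟨b', rfl⟩ :=
    Int.natCast_pow_succ_dvd_of_pow_dvd_sq_add_sq hp hp4 i (add_comm ((2 * s) ^ 2) _ ▸ hsq)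
  have hcop : IsCoprime ((p : ℤ) ^ (2 * i + 2)) (M * (M - 1)) :=
    ((hpr.coprime_iff_not_dvd.mpr hpM).mul_right (hpr.coprime_iff_not_dvd.mpr hpM')).pow_left
  refine hcop.dvd_of_dvd_mul_right ⟨3 * s' ^ 2 - 3 * M * b' ^ 2, ?_⟩
  linear_combination -h + 3 * (2 * s + (p : ℤ) ^ (i + 1) * s') * hs'

theorem stmt_general (M a s m₁ : ℕ)
    (hsum : ∑ i ∈ Finset.range M, (a + i) ^ 2 = s ^ 2)
    (hMeq : M = 24 * m₁ + 2) :
    ∀ p : ℕ, p.Prime → 3 < p → p % 4 = 3 →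
      ¬ ∃ i q : ℕ, 1 ≤ q ∧ ¬ p ∣ q ∧ 24 * m₁ + 3 = p ^ (2 * i + 1) * q := by
  rintro p hp hp3 hp4 ⟨i, q, -, hpq, hM1⟩
  have hsumℤ : 12 * (s : ℤ) ^ 2 = M * (3 * (2 * a + M - 1) ^ 2 + M ^ 2 - 1) := by
    rw [← twelve_mul_sum_range_add_sq]
    exact_mod_cast congrArg (12 * ·) hsum.symm
  have hM1ℤ : (M : ℤ) + 1 = p ^ (2 * i + 1) * q := by
    rw [hMeq]
    exact_mod_cast hM1
  have hdvd := pow_even_dvd_succ_of_pow_odd_dvd_succ hp hp3 hp4 hsumℤ (hM1ℤ ▸ dvd_mul_right _ _)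
  rw [hM1ℤ, show 2 * i + 2 = 2 * i + 1 + 1 by ring, pow_succ,
    mul_dvd_mul_iff_left (pow_ne_zero _ (mod_cast hp.ne_zero))] at hdvd
  exact hpq (Int.natCast_dvd_natCast.mp hdvd)

theorem stmt (M a s m₁ : ℕ) (hM : 1 < M) (ha : 1 ≤ a) (hs : 1 ≤ s)
    (hsum : ∑ i ∈ Finset.range M, (a + i) ^ 2 = s ^ 2)
    (hMeq : M = 24 * m₁ + 2) :
    ∀ p : ℕ, p.Prime → 3 < p → p % 4 = 3 →
      ¬ ∃ i q : ℕ, 1 ≤ q ∧ ¬ p ∣ q ∧ 24 * m₁ + 3 = p ^ (2 * i + 1) * q :=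
  stmt_general M a s m₁ hsum hMeq
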